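/- For x, z ≥ 0 and y ∈ [0, π/2], the imaginary part of G(x, yi, z) equals −arctan(sinh(x)·sin(y)/(cosh(z) + cosh(x)·cos(y))), which equals the negative of the imaginary part of S(x, yi, z), where S(x, yi, z) = i·arctan(sinh(x)·sin(y)/(cosh(z) + cosh(x)·cos(y))). -/

import Mathlib

open Real Complex

/-- The gap function `G` (logarithmic form, principal branch complex logarithm). -/
noncomputable def G (x y z : ℂ) : ℂ :=
  Complex.log ((Complex.exp x + Complex.exp (y + z)) /
    (Complex.exp (-x) + Complex.exp (y + z)))

/-- Complex inverse hyperbolic tangent (principal branch, imaginary part in `(-π/2, π/2]`). -/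
noncomputable def artanhC (z : ℂ) : ℂ := (1/2) * Complex.log ((1 + z) / (1 - z))

/-- The projection function `S` of the complexified McShane identity. -/
noncomputable def S (x y z : ℂ) : ℂ :=
  artanhC (Complex.sinh x * Complex.sinh y / (Complex.cosh z + Complex.cosh x * Complex.cosh y))

/-! With `d = cosh z + cosh x cos y` and `s = sinh x sin y`, the numerator of `G(x, yi, z)` times
the conjugate of its denominator is `2eᶻ (cosh z + cosh (x - yi)) = 2eᶻ (d - s i)`, and `d > 0`
for `|y| ≤ π/2`, so `Im G = arg (d - s i) = -arctan (s / d)`. In `S` the argument of `artanh` is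
`(s / d) i`, and `artanh (t i) = i arctan t` for real `t` is `Complex.ofReal_arctan`. -/

open ComplexConjugate

theorem Complex.arg_eq_arctan_of_re_pos {w : ℂ} (h : 0 < w.re) :
    arg w = Real.arctan (w.im / w.re) := by
  rw [← tan_arg, Real.arctan_tan]
  · exact neg_pi_div_two_lt_arg_iff.2 (Or.inl h)
  · exact arg_lt_pi_div_two_iff.2 (Or.inl h)

theorem artanhC_ofReal_mul_I (t : ℝ) : artanhC (t * I) = Real.arctan t * I := by
  rw [ofReal_arctan, Complex.arctan, artanhC]
  linear_combination ((1 / 2) * Complex.log ((1 + t * I) / (1 - t * I))) * I_sq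

theorem exp_add_exp_mul_exp_neg_add_exp (x w z : ℂ) :
    (Complex.exp x + Complex.exp (w + z)) * (Complex.exp (-x) + Complex.exp (-w + z)) =
      2 * Complex.exp z * (Complex.cosh z + Complex.cosh (x - w)) := by
  simp only [Complex.cosh, Complex.exp_add, Complex.exp_neg, Complex.exp_sub]
  field_simp
  ring

theorem exp_add_exp_mul_conj (x y z : ℝ) :
    (Complex.exp x + Complex.exp (y * I + z)) * conj (Complex.exp (-x) + Complex.exp (y * I + z)) =
      (2 * Real.exp z : ℝ) * ((Real.cosh z + Real.cosh x * Real.cos y : ℝ)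
        - (Real.sinh x * Real.sin y : ℝ) * I) := by
  have hconj : conj (Complex.exp (-x) + Complex.exp (y * I + z)) =
      Complex.exp (-x) + Complex.exp (-(y * I) + z) := by
    simp only [map_add, ← Complex.exp_conj, map_neg, map_mul, conj_ofReal, conj_I]
    ring_nf
  rw [hconj, exp_add_exp_mul_exp_neg_add_exp, Complex.cosh_sub, Complex.cosh_mul_I,
    Complex.sinh_mul_I]
  push_cast
  ring

theorem im_G_ofReal_mul_I (x y z : ℝ) (hd : 0 < Real.cosh z + Real.cosh x * Real.cos y) :
    (G x (y * I) z).im =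
      -Real.arctan (Real.sinh x * Real.sin y / (Real.cosh z + Real.cosh x * Real.cos y)) := by
  have hND := exp_add_exp_mul_conj x y z
  set D := Complex.exp (-x) + Complex.exp (y * I + z)
  set w : ℂ := (Real.cosh z + Real.cosh x * Real.cos y : ℝ) - (Real.sinh x * Real.sin y : ℝ) * I
  have hw : 0 < w.re := by
    simpa only [w, sub_re, mul_re, ofReal_re, ofReal_im, I_re, I_im, mul_zero, mul_one, sub_self,
      sub_zero] using hd
  have hD : D ≠ 0 := by
    rintro hD0
    rw [hD0, map_zero, mul_zero, eq_comm, mul_eq_zero, ofReal_eq_zero] at hND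
    rcases hND with h | h
    · exact (Real.exp_pos z).ne' (by linarith)
    · exact hw.ne' (by rw [h, zero_re])
  have hdiv : (Complex.exp x + Complex.exp (y * I + z)) / D =
      (Complex.exp x + Complex.exp (y * I + z)) * conj D * ((normSq D)⁻¹ : ℝ) := by
    rw [div_eq_mul_inv, inv_def, mul_assoc]
  rw [G, log_im, hdiv, arg_mul_real (inv_pos.2 (normSq_pos.2 hD)), hND,
    arg_real_mul _ (by positivity), arg_eq_arctan_of_re_pos hw]
  simp only [w, sub_im, sub_re, mul_im, mul_re, ofReal_re, ofReal_im, I_re, I_im]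
  rw [← Real.arctan_neg]
  congr 1
  ring

theorem S_ofReal_mul_I (x y z : ℝ) :
    S x (y * I) z =
      Real.arctan (Real.sinh x * Real.sin y / (Real.cosh z + Real.cosh x * Real.cos y)) * I := by
  rw [S, Complex.sinh_mul_I, Complex.cosh_mul_I, ← artanhC_ofReal_mul_I]
  push_cast
  ring_nf

theorem im_G_of_imaginary_y_general (x y z : ℝ)
    (hy : y ∈ Set.Icc 0 (π/2)) :
    (G (x : ℂ) ((y : ℂ) * Complex.I) (z : ℂ)).im =
        - Real.arctan (Real.sinh x * Real.sin y /
          (Real.cosh z + Real.cosh x * Real.cos y)) ∧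
      S (x : ℂ) ((y : ℂ) * Complex.I) (z : ℂ) =
        ((Real.arctan (Real.sinh x * Real.sin y /
          (Real.cosh z + Real.cosh x * Real.cos y))) : ℂ) * Complex.I ∧
      (G (x : ℂ) ((y : ℂ) * Complex.I) (z : ℂ)).im
        + (S (x : ℂ) ((y : ℂ) * Complex.I) (z : ℂ)).im = 0 := by
  have hcos : 0 ≤ Real.cos y :=
    Real.cos_nonneg_of_mem_Icc ⟨by linarith [hy.1, Real.pi_pos], hy.2⟩
  have hd : 0 < Real.cosh z + Real.cosh x * Real.cos y :=
    add_pos_of_pos_of_nonneg (Real.cosh_pos z) (mul_nonneg (Real.cosh_pos x).le hcos)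
  have hG := im_G_ofReal_mul_I x y z hd
  have hS := S_ofReal_mul_I x y z
  refine ⟨hG, hS, ?_⟩
  rw [hG, hS, mul_I_im, ofReal_re, neg_add_cancel]

theorem im_G_of_imaginary_y (x y z : ℝ) (hx : 0 ≤ x) (hz : 0 ≤ z)
    (hy : y ∈ Set.Icc 0 (π/2)) :
    (G (x : ℂ) ((y : ℂ) * Complex.I) (z : ℂ)).im =
        - Real.arctan (Real.sinh x * Real.sin y /
          (Real.cosh z + Real.cosh x * Real.cos y)) ∧
      S (x : ℂ) ((y : ℂ) * Complex.I) (z : ℂ) =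
        ((Real.arctan (Real.sinh x * Real.sin y /
          (Real.cosh z + Real.cosh x * Real.cos y))) : ℂ) * Complex.I ∧
      (G (x : ℂ) ((y : ℂ) * Complex.I) (z : ℂ)).im
        + (S (x : ℂ) ((y : ℂ) * Complex.I) (z : ℂ)).im = 0 :=
  im_G_of_imaginary_y_general x y z hy
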